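/- arXiv:1406.1635 — 2 statements merged into one kernel-verified Lean document; each statement's English description precedes it below -/
import Mathlib

section
/- For every real number A > 0 there exists p ∈ [2, ∞) such that p · A^{−4/p} ≤ 4 e · log(e + 1/A). -/
open Real

/-! With `p = max 2 (4 log (1/A))` the exponent `-4/p · log A` is at most `1`, so
`A^{-4/p} ≤ e`, while both `2` and `4 log (1/A)` are at most `4 log (e + 1/A)`. -/

theorem Real.rpow_le_exp_one_of_mul_log_le {A x : ℝ} (hA : 0 < A) (h : x * log A ≤ 1) :
    A ^ x ≤ exp 1 := by
  rw [rpow_def_of_pos hA, mul_comm]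
  exact exp_le_exp.2 h

theorem Real.one_le_log_exp_one_add {x : ℝ} (hx : 0 ≤ x) : 1 ≤ log (exp 1 + x) := by
  rw [← log_exp 1]
  exact log_le_log (exp_pos 1) (by rw [log_exp]; linarith)

theorem Real.log_le_log_exp_one_add {x : ℝ} (hx : 0 < x) : log x ≤ log (exp 1 + x) :=
  log_le_log hx (by linarith [exp_pos 1])

/-- For every `A > 0` there exists `p ∈ [2, ∞)` with
`p A^{-4/p} ≤ 4 e log (e + 1/A)`. -/
theorem stmt5 (A : ℝ) (hA : 0 < A) :
    ∃ p : ℝ, 2 ≤ p ∧ p * A ^ (-4/p) ≤ 4 * Real.exp 1 * Real.log (Real.exp 1 + 1/A) := by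
  set p := max 2 (-4 * log A)
  have hp : 0 < p := lt_max_of_lt_left two_pos
  have hpow : A ^ (-4/p) ≤ exp 1 := by
    refine rpow_le_exp_one_of_mul_log_le hA ?_
    rw [div_mul_eq_mul_div, div_le_one hp]
    exact le_max_right _ _
  have hp_le : p ≤ 4 * log (exp 1 + 1/A) := by
    have hlog_inv : -log A ≤ log (exp 1 + 1/A) := by
      simpa [log_inv] using log_le_log_exp_one_add (one_div_pos.2 hA)
    refine max_le ?_ ?_
    · linarith [one_le_log_exp_one_add (one_div_pos.2 hA).le]
    · linarith
  refine ⟨p, le_max_left _ _, ?_⟩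
  calc p * A ^ (-4/p) ≤ p * exp 1 := mul_le_mul_of_nonneg_left hpow hp.le
    _ ≤ 4 * log (exp 1 + 1/A) * exp 1 := mul_le_mul_of_nonneg_right hp_le (exp_pos 1).le
    _ = 4 * exp 1 * log (exp 1 + 1/A) := by ring
end

section
/- Let T > 0 and c ≥ 0, let Y₁, Y₂ : [0, T] → ℝ be nonnegative differentiable functions with Y₁ integrable on (0, T), and let M₅, M₆ : [0, T] → ℝ be nonnegative integrable functions such that Y₁'(t) + Y₂'(t) ≤ M₅(t) · Y₁(t) + M₆(t) + c · Y₁(t)² · log(e + Y₁(t)) for every t ∈ [0, T]. Then for every t ∈ [0, T] one has e + Y₁(t) + Y₂(t) ≤ (e + Y₁(0) + Y₂(0))^{exp(∫₀ᵗ (M₅(s) + M₆(s)/e + c · Y₁(s)) ds)}. -/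
/-!
With `Z = e + Y₁ + Y₂ ≥ e`, each term of the right-hand side is bounded by a coefficient times
`Z log Z`: `Y₁ ≤ Z log Z`, `1 ≤ Z log Z / e` and `Y₁ log (e + Y₁) ≤ Z log Z`. Hence
`Z' ≤ g Z log Z` with `g = M₅ + M₆/e + c Y₁` integrable, i.e. `(log log Z)' ≤ g`, and integrating
and exponentiating twice gives the bound.
-/

open MeasureTheory Set Real

theorem le_rpow_exp_of_log_log_le {x y I : ℝ} (hx : 1 < x) (hy : 1 < y)
    (h : log (log y) ≤ log (log x) + I) : y ≤ x ^ exp I := by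
  have hlog : log y ≤ log x * exp I := by
    have := exp_le_exp.2 h
    rwa [exp_add, exp_log (log_pos hy), exp_log (log_pos hx)] at this
  calc y = exp (log y) := (exp_log (by linarith)).symm
    _ ≤ exp (log x * exp I) := exp_le_exp.2 hlog
    _ = x ^ exp I := (rpow_def_of_pos (by linarith) _).symm

theorem le_rpow_exp_integral_of_deriv_le_mul_log {Z Z' g : ℝ → ℝ} {a b : ℝ} (hab : a ≤ b)
    (hZ : ∀ s ∈ Icc a b, HasDerivAt Z (Z' s) s) (hZ1 : ∀ s ∈ Icc a b, 1 < Z s)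
    (hg : IntegrableOn g (Icc a b)) (hZ' : ∀ s ∈ Ioo a b, Z' s ≤ g s * (Z s * log (Z s))) :
    Z b ≤ Z a ^ exp (∫ s in a..b, g s) := by
  have hW : ∀ s ∈ Icc a b,
      HasDerivAt (fun s => log (log (Z s))) (Z' s / (Z s * log (Z s))) s := by
    intro s hs
    have hZs := hZ1 s hs
    have := ((hZ s hs).log (by linarith)).log (log_pos hZs).ne'
    rwa [div_div] at this
  have hFTC : log (log (Z b)) - log (log (Z a)) ≤ ∫ s in a..b, g s := by
    refine intervalIntegral.sub_le_integral_of_hasDeriv_right_of_le hab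
      (fun s hs => (hW s hs).continuousAt.continuousWithinAt)
      (fun s hs => (hW s (Ioo_subset_Icc_self hs)).hasDerivWithinAt) hg fun s hs => ?_
    have hZs := hZ1 s (Ioo_subset_Icc_self hs)
    rw [div_le_iff₀ (mul_pos (by linarith) (log_pos hZs))]
    exact hZ' s hs
  exact le_rpow_exp_of_log_log_le (hZ1 a (left_mem_Icc.2 hab)) (hZ1 b (right_mem_Icc.2 hab))
    (by linarith)

theorem add_add_mul_sq_mul_log_le_mul_mul_log {y m₅ m₆ c z : ℝ} (hy : 0 ≤ y) (hm₅ : 0 ≤ m₅)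
    (hm₆ : 0 ≤ m₆) (hc : 0 ≤ c) (hz : exp 1 + y ≤ z) :
    m₅ * y + m₆ + c * y ^ 2 * log (exp 1 + y) ≤
      (m₅ + m₆ / exp 1 + c * y) * (z * log z) := by
  have he1 : 1 ≤ exp 1 := one_le_exp zero_le_one
  have hz0 : 0 ≤ z := by linarith
  have hlogz : 1 ≤ log z := (le_log_iff_exp_le (by linarith)).2 (by linarith)
  have hlog0 : 0 ≤ log (exp 1 + y) := log_nonneg (by linarith)
  have hz_le : z ≤ z * log z := le_mul_of_one_le_right hz0 hlogz
  have hy_le : y ≤ z * log z := by linarith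
  have hylog_le : y * log (exp 1 + y) ≤ z * log z :=
    mul_le_mul (by linarith) (log_le_log (by linarith) hz) hlog0 hz0
  have hm₆_le : m₆ ≤ m₆ / exp 1 * (z * log z) := by
    rw [div_mul_eq_mul_div, le_div_iff₀ (exp_pos 1)]
    exact mul_le_mul_of_nonneg_left (by linarith) hm₆
  calc m₅ * y + m₆ + c * y ^ 2 * log (exp 1 + y)
      = m₅ * y + m₆ + c * y * (y * log (exp 1 + y)) := by ring
    _ ≤ m₅ * (z * log z) + m₆ / exp 1 * (z * log z) + c * y * (z * log z) := by
      gcongr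
    _ = (m₅ + m₆ / exp 1 + c * y) * (z * log z) := by ring

theorem stmt13_general (T c : ℝ) (hc : 0 ≤ c)
    (Y₁ Y₂ Y₁' Y₂' M₅ M₆ : ℝ → ℝ)
    (hY₁diff : ∀ t ∈ Set.Icc (0 : ℝ) T, HasDerivAt Y₁ (Y₁' t) t)
    (hY₂diff : ∀ t ∈ Set.Icc (0 : ℝ) T, HasDerivAt Y₂ (Y₂' t) t)
    (hY₁0 : ∀ t ∈ Set.Icc (0 : ℝ) T, 0 ≤ Y₁ t)
    (hY₂0 : ∀ t ∈ Set.Icc (0 : ℝ) T, 0 ≤ Y₂ t)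
    (hY₁int : IntegrableOn Y₁ (Set.Ioo (0 : ℝ) T))
    (hM₅0 : ∀ t ∈ Set.Icc (0 : ℝ) T, 0 ≤ M₅ t)
    (hM₆0 : ∀ t ∈ Set.Icc (0 : ℝ) T, 0 ≤ M₆ t)
    (hM₅int : IntegrableOn M₅ (Set.Icc (0 : ℝ) T))
    (hM₆int : IntegrableOn M₆ (Set.Icc (0 : ℝ) T))
    (hineq : ∀ t ∈ Set.Icc (0 : ℝ) T,
      Y₁' t + Y₂' t ≤ M₅ t * Y₁ t + M₆ t + c * Y₁ t ^ 2 * Real.log (Real.exp 1 + Y₁ t)) :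
    ∀ t ∈ Set.Icc (0 : ℝ) T,
      Real.exp 1 + Y₁ t + Y₂ t ≤
        (Real.exp 1 + Y₁ 0 + Y₂ 0) ^
          Real.exp (∫ s in (0 : ℝ)..t, (M₅ s + M₆ s / Real.exp 1 + c * Y₁ s)) := by
  intro t ht
  have hsub : Icc 0 t ⊆ Icc 0 T := Icc_subset_Icc le_rfl ht.2
  have hY₁int' : IntegrableOn Y₁ (Icc 0 T) := (integrableOn_Icc_iff_integrableOn_Ioo).2 hY₁int
  refine le_rpow_exp_integral_of_deriv_le_mul_log (Z := fun s => exp 1 + Y₁ s + Y₂ s)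
    (Z' := fun s => Y₁' s + Y₂' s) ht.1
    (fun s hs => ((hY₁diff s (hsub hs)).const_add _).add (hY₂diff s (hsub hs)))
    (fun s hs => ?_) ?_ (fun s hs => ?_)
  · have := hY₁0 s (hsub hs)
    have := hY₂0 s (hsub hs)
    linarith [add_one_lt_exp one_ne_zero]
  · exact (((hM₅int.mono_set hsub).add ((hM₆int.mono_set hsub).div_const _)).add
      ((hY₁int'.mono_set hsub).const_mul _))
  · have hs' := hsub (Ioo_subset_Icc_self hs)
    exact (hineq s hs').trans (add_add_mul_sq_mul_log_le_mul_mul_log (hY₁0 s hs') (hM₅0 s hs')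
      (hM₆0 s hs') hc (by linarith [hY₂0 s hs']))

/-- If `Y₁, Y₂ ≥ 0` are differentiable on `[0, T]`, `Y₁` is integrable on
`(0, T)`, `M₅, M₆ ≥ 0` are integrable, and
`Y₁' + Y₂' ≤ M₅ Y₁ + M₆ + c Y₁² log (e + Y₁)` on `[0, T]`, then for every
`t ∈ [0, T]`,
`e + Y₁(t) + Y₂(t) ≤ (e + Y₁(0) + Y₂(0))^{exp(∫₀ᵗ (M₅ + M₆/e + c Y₁))}`. -/
theorem stmt13 (T c : ℝ) (hT : 0 < T) (hc : 0 ≤ c)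
    (Y₁ Y₂ Y₁' Y₂' M₅ M₆ : ℝ → ℝ)
    (hY₁diff : ∀ t ∈ Set.Icc (0 : ℝ) T, HasDerivAt Y₁ (Y₁' t) t)
    (hY₂diff : ∀ t ∈ Set.Icc (0 : ℝ) T, HasDerivAt Y₂ (Y₂' t) t)
    (hY₁0 : ∀ t ∈ Set.Icc (0 : ℝ) T, 0 ≤ Y₁ t)
    (hY₂0 : ∀ t ∈ Set.Icc (0 : ℝ) T, 0 ≤ Y₂ t)
    (hY₁int : IntegrableOn Y₁ (Set.Ioo (0 : ℝ) T))
    (hM₅0 : ∀ t ∈ Set.Icc (0 : ℝ) T, 0 ≤ M₅ t)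
    (hM₆0 : ∀ t ∈ Set.Icc (0 : ℝ) T, 0 ≤ M₆ t)
    (hM₅int : IntegrableOn M₅ (Set.Icc (0 : ℝ) T))
    (hM₆int : IntegrableOn M₆ (Set.Icc (0 : ℝ) T))
    (hineq : ∀ t ∈ Set.Icc (0 : ℝ) T,
      Y₁' t + Y₂' t ≤ M₅ t * Y₁ t + M₆ t + c * Y₁ t ^ 2 * Real.log (Real.exp 1 + Y₁ t)) :
    ∀ t ∈ Set.Icc (0 : ℝ) T,
      Real.exp 1 + Y₁ t + Y₂ t ≤
        (Real.exp 1 + Y₁ 0 + Y₂ 0) ^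
          Real.exp (∫ s in (0 : ℝ)..t, (M₅ s + M₆ s / Real.exp 1 + c * Y₁ s)) :=
  stmt13_general T c hc Y₁ Y₂ Y₁' Y₂' M₅ M₆ hY₁diff hY₂diff hY₁0 hY₂0 hY₁int hM₅0 hM₆0 hM₅int hM₆int
    hineq
end
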